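/- arXiv:1512.01491 — 3 statements merged into one kernel-verified Lean document; each statement's English description precedes it below -/
import Mathlib

section
/- Let q ≥ 2 be a natural number and let x : Fin q → Fin q → ℝ be a doubly-indexed family of real numbers. Then (q−1)·∑_{a,b} (x a b)² = ∑_{a<b} (x a a − x b b)² + ∑_{a<b} (x a b + x b a)² + (q−2)·∑_{a≠b} (x a b)² + 2·∑_{a<b} (x a a · x b b − x a b · x b a), where all sums run over indices in Fin q and ∑_{a<b} denotes the sum over pairs with a < b. -/
open Finset

/-!
Write `n` for the number of indices, `A = ∑ x_ab²`, `D = ∑ x_aa²`, `T = ∑ x_aa` and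
`P = ∑ x_ab x_ba`. Every sum over `a < b` has a summand symmetric in `(a, b)`, so twice it is
the full double sum minus the diagonal. This gives `2nD - 2T²`, `2A + 2P - 4D` and `T² - P`
for twice the three sums over `a < b`, while the sum over `a ≠ b` is `A - D`; the identity is
then linear in these quantities.
-/

section PairSums

variable {ι M : Type*} [Fintype ι] [AddCommGroup M]

theorem sum_sum_ite_ne [DecidableEq ι] (f : ι → ι → M) :
    (∑ a, ∑ b, if a ≠ b then f a b else 0) = ∑ a, ∑ b, f a b - ∑ a, f a a := by
  rw [← sum_sub_distrib]
  refine sum_congr rfl fun a _ => ?_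
  rw [← sum_filter, filter_ne, sum_erase_eq_sub (mem_univ a)]

theorem two_nsmul_sum_sum_ite_lt_of_symm [LinearOrder ι] (f : ι → ι → M)
    (hf : ∀ a b, f a b = f b a) :
    2 • (∑ a, ∑ b, if a < b then f a b else 0) =
      ∑ a, ∑ b, f a b - ∑ a, f a a := by
  rw [← sum_sum_ite_ne, two_nsmul]
  nth_rewrite 2 [sum_comm]
  simp only [← sum_add_distrib]
  refine sum_congr rfl fun a _ => sum_congr rfl fun b _ => ?_
  rcases lt_trichotomy a b with h | rfl | h
  · simp [h, h.ne, h.not_gt]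
  · simp
  · simp [h, h.ne', h.not_gt, hf a b]

end PairSums

section SquareArrays

variable {ι R : Type*} [Fintype ι] [CommRing R]

theorem sum_sum_sub_sq (y : ι → R) :
    ∑ a, ∑ b, (y a - y b) ^ 2 = 2 * (Fintype.card ι * ∑ a, y a ^ 2 - (∑ a, y a) ^ 2) := by
  simp only [sub_sq, sum_add_distrib, sum_sub_distrib, sum_const, card_univ, nsmul_eq_mul,
    ← mul_sum, ← sum_mul]
  ring

theorem sum_sum_add_transpose_sq (x : ι → ι → R) :
    ∑ a, ∑ b, (x a b + x b a) ^ 2 = 2 * ∑ a, ∑ b, x a b ^ 2 + 2 * ∑ a, ∑ b, x a b * x b a := by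
  simp only [add_sq, mul_assoc, sum_add_distrib, ← mul_sum]
  rw [sum_comm (f := fun a b => x b a ^ 2)]
  ring

theorem sum_sum_diag_mul_sub (x : ι → ι → R) :
    ∑ a, ∑ b, (x a a * x b b - x a b * x b a) = (∑ a, x a a) ^ 2 - ∑ a, ∑ b, x a b * x b a := by
  simp only [sum_sub_distrib, ← mul_sum, ← sum_mul, sq]

end SquareArrays

theorem stmt_0_general (q : ℕ) (x : Fin q → Fin q → ℝ) :
    ((q : ℝ) - 1) * ∑ a : Fin q, ∑ b : Fin q, (x a b) ^ 2 =
      (∑ a : Fin q, ∑ b : Fin q, if a < b then (x a a - x b b) ^ 2 else 0)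
        + (∑ a : Fin q, ∑ b : Fin q, if a < b then (x a b + x b a) ^ 2 else 0)
        + ((q : ℝ) - 2) * (∑ a : Fin q, ∑ b : Fin q, if a ≠ b then (x a b) ^ 2 else 0)
        + 2 * (∑ a : Fin q, ∑ b : Fin q,
            if a < b then x a a * x b b - x a b * x b a else 0) := by
  have hdiag := two_nsmul_sum_sum_ite_lt_of_symm (fun a b => (x a a - x b b) ^ 2)
    fun a b => by ring
  have hsym := two_nsmul_sum_sum_ite_lt_of_symm (fun a b => (x a b + x b a) ^ 2)
    fun a b => by ring
  have hdet := two_nsmul_sum_sum_ite_lt_of_symm (fun a b => x a a * x b b - x a b * x b a)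
    fun a b => by ring
  have hoff := sum_sum_ite_ne fun a b => x a b ^ 2
  have hsym_diag : ∑ a, (x a a + x a a) ^ 2 = 4 * ∑ a, x a a ^ 2 := by
    rw [mul_sum]
    exact sum_congr rfl fun a _ => by ring
  rw [sum_sum_sub_sq] at hdiag
  rw [sum_sum_add_transpose_sq, hsym_diag] at hsym
  rw [sum_sum_diag_mul_sub] at hdet
  simp only [two_nsmul, Fintype.card_fin, sub_self, ne_eq, OfNat.ofNat_ne_zero, not_false_eq_true,
    zero_pow, sum_const_zero, sub_zero] at hdiag hsym hdet
  linear_combination (-1/2 : ℝ) * hdiag - 1/2 * hsym - ((q : ℝ) - 2) * hoff - hdet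

theorem stmt_0 (q : ℕ) (hq : 2 ≤ q) (x : Fin q → Fin q → ℝ) :
    ((q : ℝ) - 1) * ∑ a : Fin q, ∑ b : Fin q, (x a b) ^ 2 =
      (∑ a : Fin q, ∑ b : Fin q, if a < b then (x a a - x b b) ^ 2 else 0)
        + (∑ a : Fin q, ∑ b : Fin q, if a < b then (x a b + x b a) ^ 2 else 0)
        + ((q : ℝ) - 2) * (∑ a : Fin q, ∑ b : Fin q, if a ≠ b then (x a b) ^ 2 else 0)
        + 2 * (∑ a : Fin q, ∑ b : Fin q,
            if a < b then x a a * x b b - x a b * x b a else 0) :=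
  stmt_0_general q x
end

section
/- Let q ≥ 2 be a natural number and let x : Fin q → Fin q → ℝ. Then ∑_{a,b} (x a b)² ≥ (2/(q−1)) · ∑_{a<b} (x a a · x b b − x a b · x b a), where the sums run over Fin q and ∑_{a<b} is over pairs with a < b. -/
/-!
Write `t = ∑ x a a`, `D = ∑ (x a a)²`, `C = ∑ x a b * x b a` and `S = ∑ (x a b)²`. Twice the second
mean curvature is `t² - C`; Cauchy–Schwarz gives `t² ≤ q D`, and comparing the diagonal of
`x + xᵀ` with all of it gives `4 D ≤ 2 S + 2 C`. Hence `2 μ ≤ (q - 2) D + S ≤ (q - 1) S`,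
the last step because `D ≤ S`.
-/

open Finset

section

variable {ι : Type*} [Fintype ι]

lemma sum_sq_diag_le_sum_sq (y : ι → ι → ℝ) :
    ∑ a, y a a ^ 2 ≤ ∑ a, ∑ b, y a b ^ 2 :=
  sum_le_sum fun a _ ↦ single_le_sum (fun b _ ↦ sq_nonneg (y a b)) (mem_univ a)

lemma sum_sq_add_transpose (x : ι → ι → ℝ) :
    ∑ a, ∑ b, (x a b + x b a) ^ 2 =
      2 * ∑ a, ∑ b, x a b ^ 2 + 2 * ∑ a, ∑ b, x a b * x b a := by
  have hswap : ∑ a, ∑ b, x b a ^ 2 = ∑ a, ∑ b, x a b ^ 2 := sum_comm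
  simp only [add_sq, mul_assoc, sum_add_distrib, ← mul_sum, hswap]
  ring

lemma four_mul_sum_sq_diag_le (x : ι → ι → ℝ) :
    4 * ∑ a, x a a ^ 2 ≤ 2 * ∑ a, ∑ b, x a b ^ 2 + 2 * ∑ a, ∑ b, x a b * x b a := by
  have hdiag := sum_sq_diag_le_sum_sq fun a b ↦ x a b + x b a
  rw [sum_sq_add_transpose] at hdiag
  simpa only [← two_mul, mul_pow, ← mul_sum, show (2 : ℝ) ^ 2 = 4 by norm_num] using hdiag

variable [LinearOrder ι]

lemma two_mul_sum_upper_eq_of_symm (f : ι → ι → ℝ) (hf : ∀ a b, f a b = f b a) :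
    2 * ∑ a, ∑ b, (if a < b then f a b else 0) = ∑ a, ∑ b, f a b - ∑ a, f a a := by
  have hlower : ∑ a, ∑ b, (if a < b then f a b else 0) =
      ∑ a, ∑ b, (if b < a then f a b else 0) := by
    rw [sum_comm]
    simp only [hf]
  have hsplit : ∀ a b, f a b =
      (if a < b then f a b else 0) + (if b < a then f a b else 0) + (if a = b then f a b else 0) := by
    intro a b
    rcases lt_trichotomy a b with h | rfl | h
    · simp [h, h.ne, h.not_gt]
    · simp
    · simp [h, h.ne', h.not_gt]
  have hdiag : ∑ a, ∑ b, (if a = b then f a b else 0) = ∑ a, f a a := by simp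
  conv_rhs => rw [← hdiag]; enter [1, 2, a, 2, b]; rw [hsplit a b]
  simp only [sum_add_distrib, ← hlower]
  ring

/-- The second mean curvature: the sum of the principal `2 × 2` minors of `x`. -/
def secondMeanCurvature (x : ι → ι → ℝ) : ℝ :=
  ∑ a, ∑ b, if a < b then x a a * x b b - x a b * x b a else 0

lemma two_mul_secondMeanCurvature (x : ι → ι → ℝ) :
    2 * secondMeanCurvature x = (∑ a, x a a) ^ 2 - ∑ a, ∑ b, x a b * x b a := by
  rw [secondMeanCurvature, two_mul_sum_upper_eq_of_symm _ fun a b ↦ by ring, sq, sum_mul_sum,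
    ← sum_sub_distrib]
  simp only [sum_sub_distrib, sub_self, sub_zero]

theorem two_mul_secondMeanCurvature_le (x : ι → ι → ℝ) (hcard : 2 ≤ Fintype.card ι) :
    2 * secondMeanCurvature x ≤ ((Fintype.card ι : ℝ) - 1) * ∑ a, ∑ b, x a b ^ 2 := by
  have htrace : (∑ a, x a a) ^ 2 ≤ Fintype.card ι * ∑ a, x a a ^ 2 :=
    sq_sum_le_card_mul_sum_sq (s := univ) (f := fun a ↦ x a a)
  have hcard' : (2 : ℝ) ≤ Fintype.card ι := by exact_mod_cast hcard
  linarith [two_mul_secondMeanCurvature x, four_mul_sum_sq_diag_le x,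
    mul_le_mul_of_nonneg_left (sum_sq_diag_le_sum_sq x) (sub_nonneg.2 hcard')]

end

theorem stmt_1 (q : ℕ) (hq : 2 ≤ q) (x : Fin q → Fin q → ℝ) :
    ∑ a : Fin q, ∑ b : Fin q, (x a b) ^ 2 ≥
      (2 / ((q : ℝ) - 1)) *
        ∑ a : Fin q, ∑ b : Fin q, if a < b then x a a * x b b - x a b * x b a else 0 := by
  have hbound := two_mul_secondMeanCurvature_le x (by simpa using hq)
  rw [Fintype.card_fin] at hbound
  have hq' : (0 : ℝ) < q - 1 := by
    have : (2 : ℝ) ≤ q := by exact_mod_cast hq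
    linarith
  rw [secondMeanCurvature] at hbound
  rw [ge_iff_le, div_mul_eq_mul_div, div_le_iff₀ hq']
  linarith
end

section
/- Let q ≥ 3 be a natural number and let x : Fin q → Fin q → ℝ. Then (q−1)·∑_{a,b} (x a b)² = 2·∑_{a<b} (x a a · x b b − x a b · x b a) holds if and only if x a b = 0 for all a ≠ b and x a a = x b b for all a, b; equivalently, if and only if x is a real scalar multiple of the identity matrix. -/
/-!
Subtracting the two sides gives a sum of squares over the pairs `a < b`:
`(q - 1) ∑ x_ab² - 2 ∑_{a<b} (x_aa x_bb - x_ab x_ba)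
  = ∑_{a<b} ((x_aa - x_bb)² + (q - 2)(x_ab² + x_ba²) + (x_ab + x_ba)²)`.
For `q ≥ 3` the weight `q - 2` is positive, so the sum vanishes exactly when every off-diagonal
entry is zero and all diagonal entries agree.
-/

open Finset

section PairSums

variable {ι : Type*} [Fintype ι] [LinearOrder ι]

theorem sum_sum_eq_sum_diag_add_sum_lt {M : Type*} [AddCommMonoid M] (F : ι → ι → M) :
    ∑ a, ∑ b, F a b = ∑ a, F a a + ∑ a, ∑ b, if a < b then F a b + F b a else 0 := by
  have hsplit : ∀ a b, F a b = (if a = b then F a b else 0) +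
      ((if a < b then F a b else 0) + if b < a then F a b else 0) := by
    intro a b
    rcases lt_trichotomy a b with h | rfl | h
    · simp [h, h.ne, asymm h]
    · simp
    · simp [h, h.ne', asymm h]
  have hswap : ∑ a, ∑ b, (if b < a then F a b else 0) = ∑ a, ∑ b, if a < b then F b a else 0 :=
    sum_comm
  calc ∑ a, ∑ b, F a b
      = ∑ a, ∑ b, ((if a = b then F a b else 0) +
          ((if a < b then F a b else 0) + if b < a then F a b else 0)) := by
        simp_rw [← hsplit]
    _ = ∑ a, F a a + (∑ a, ∑ b, (if a < b then F a b else 0) +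
          ∑ a, ∑ b, if b < a then F a b else 0) := by
        simp only [sum_add_distrib, sum_ite_eq, mem_univ, if_true]
    _ = ∑ a, F a a + ∑ a, ∑ b, if a < b then F a b + F b a else 0 := by
        simp only [hswap, ← sum_add_distrib, ite_add_ite, add_zero]

theorem sum_sum_lt_add_eq_card_sub_one_mul {R : Type*} [Ring R] (g : ι → R) :
    ∑ a, ∑ b, (if a < b then g a + g b else 0) = ((Fintype.card ι : R) - 1) * ∑ a, g a := by
  have h := sum_sum_eq_sum_diag_add_sum_lt fun a (_ : ι) => g a
  rw [sub_one_mul, eq_sub_iff_add_eq', ← h]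
  simp [sum_const, nsmul_eq_mul, mul_sum]

theorem card_sub_one_mul_sum_sq_sub_two_mul_sum_minors {R : Type*} [CommRing R]
    (x : ι → ι → R) :
    ((Fintype.card ι : R) - 1) * ∑ a, ∑ b, x a b ^ 2 -
        2 * ∑ a, ∑ b, (if a < b then x a a * x b b - x a b * x b a else 0) =
      ∑ a, ∑ b, if a < b then (x a a - x b b) ^ 2 +
        ((Fintype.card ι : R) - 2) * (x a b ^ 2 + x b a ^ 2) + (x a b + x b a) ^ 2 else 0 := by
  set q : R := (Fintype.card ι : R)
  have hterm : ∀ a b, (if a < b then (x a a - x b b) ^ 2 +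
        (q - 2) * (x a b ^ 2 + x b a ^ 2) + (x a b + x b a) ^ 2 else 0) =
      (if a < b then x a a ^ 2 + x b b ^ 2 else 0) +
        (q - 1) * (if a < b then x a b ^ 2 + x b a ^ 2 else 0) -
        2 * (if a < b then x a a * x b b - x a b * x b a else 0) := by
    intro a b
    split_ifs <;> ring
  rw [sum_sum_eq_sum_diag_add_sum_lt fun a b => x a b ^ 2]
  simp only [hterm, sum_add_distrib, sum_sub_distrib, ← mul_sum,
    sum_sum_lt_add_eq_card_sub_one_mul fun a => x a a ^ 2]
  ring

theorem sum_sum_ite_lt_eq_zero_iff {M : Type*} [AddCommMonoid M] [PartialOrder M]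
    [AddLeftMono M] {f : ι → ι → M} (hf : ∀ a b, a < b → 0 ≤ f a b) :
    ∑ a, ∑ b, (if a < b then f a b else 0) = 0 ↔ ∀ a b, a < b → f a b = 0 := by
  have hnonneg : ∀ a b, 0 ≤ if a < b then f a b else 0 := fun a b => by
    split_ifs with h
    exacts [hf a b h, le_rfl]
  rw [sum_eq_zero_iff_of_nonneg fun a _ => sum_nonneg fun b _ => hnonneg a b]
  simp only [mem_univ, true_implies,
    sum_eq_zero_iff_of_nonneg fun b _ => hnonneg _ b, ite_eq_right_iff]

end PairSums

theorem forall_lt_iff_offDiag_eq_zero_and_diag_eq {ι R : Type*} [LinearOrder ι] [Zero R]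
    (x : ι → ι → R) :
    (∀ a b, a < b → x a a = x b b ∧ x a b = 0 ∧ x b a = 0) ↔
      (∀ a b, a ≠ b → x a b = 0) ∧ ∀ a b, x a a = x b b := by
  constructor
  · intro h
    refine ⟨fun a b hab => ?_, fun a b => ?_⟩
    · rcases hab.lt_or_gt with hlt | hgt
      exacts [(h a b hlt).2.1, (h b a hgt).2.2]
    · rcases lt_trichotomy a b with hlt | rfl | hgt
      exacts [(h a b hlt).1, rfl, (h b a hgt).1.symm]
  · rintro ⟨hoff, hdiag⟩ a b hab
    exact ⟨hdiag a b, hoff a b hab.ne, hoff b a hab.ne'⟩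

section Ordered

variable {R : Type*} [Field R] [LinearOrder R] [IsStrictOrderedRing R]

theorem sq_sub_add_mul_add_sq_eq_zero_iff {k : R} (hk : 0 < k) (d₁ d₂ u v : R) :
    (d₁ - d₂) ^ 2 + k * (u ^ 2 + v ^ 2) + (u + v) ^ 2 = 0 ↔ d₁ = d₂ ∧ u = 0 ∧ v = 0 := by
  constructor
  · intro h
    have hsq : ∀ w : R, 0 ≤ k * w ^ 2 := fun w => mul_nonneg hk.le (sq_nonneg w)
    have hku : k * u ^ 2 = 0 := by nlinarith [hsq u, hsq v, sq_nonneg (d₁ - d₂), sq_nonneg (u + v)]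
    have hkv : k * v ^ 2 = 0 := by nlinarith [hsq u, hsq v, sq_nonneg (d₁ - d₂), sq_nonneg (u + v)]
    have hu : u = 0 := by simpa [hk.ne'] using hku
    have hv : v = 0 := by simpa [hk.ne'] using hkv
    subst hu hv
    exact ⟨sub_eq_zero.mp (pow_eq_zero_iff two_ne_zero |>.mp (by simpa using h)), rfl, rfl⟩
  · rintro ⟨rfl, rfl, rfl⟩
    ring

theorem card_sub_one_mul_sum_sq_eq_two_mul_sum_minors_iff {ι : Type*} [Fintype ι]
    [LinearOrder ι] (hcard : 3 ≤ Fintype.card ι) (x : ι → ι → R) :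
    ((Fintype.card ι : R) - 1) * ∑ a, ∑ b, x a b ^ 2 =
        2 * ∑ a, ∑ b, (if a < b then x a a * x b b - x a b * x b a else 0) ↔
      (∀ a b, a ≠ b → x a b = 0) ∧ ∀ a b, x a a = x b b := by
  have hk : 0 < (Fintype.card ι : R) - 2 := by
    have : (3 : R) ≤ Fintype.card ι := by exact_mod_cast hcard
    linarith
  rw [← sub_eq_zero, card_sub_one_mul_sum_sq_sub_two_mul_sum_minors,
    sum_sum_ite_lt_eq_zero_iff fun a b _ => by positivity]
  simp only [sq_sub_add_mul_add_sq_eq_zero_iff hk]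
  exact forall_lt_iff_offDiag_eq_zero_and_diag_eq x

end Ordered

theorem offDiag_eq_zero_and_diag_eq_iff_exists_eq_smul_one {ι R : Type*} [DecidableEq ι]
    [Nonempty ι] [MulZeroOneClass R] (x : ι → ι → R) :
    ((∀ a b, a ≠ b → x a b = 0) ∧ ∀ a b, x a a = x b b) ↔ ∃ c : R, x = c • (1 : Matrix ι ι R) := by
  constructor
  · rintro ⟨hoff, hdiag⟩
    obtain ⟨i⟩ := ‹Nonempty ι›
    refine ⟨x i i, funext fun a => funext fun b => ?_⟩
    rcases eq_or_ne a b with rfl | hab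
    · simp [hdiag a i]
    · simp [hoff a b hab, hab]
  · rintro ⟨c, rfl⟩
    exact ⟨fun a b hab => by simp [hab], fun a b => by simp⟩

theorem stmt_3 (q : ℕ) (hq : 3 ≤ q) (x : Fin q → Fin q → ℝ) :
    ((((q : ℝ) - 1) * ∑ a : Fin q, ∑ b : Fin q, (x a b) ^ 2 =
        2 * ∑ a : Fin q, ∑ b : Fin q,
          if a < b then x a a * x b b - x a b * x b a else 0) ↔
      ((∀ a b : Fin q, a ≠ b → x a b = 0) ∧ ∀ a b : Fin q, x a a = x b b)) ∧
    (((∀ a b : Fin q, a ≠ b → x a b = 0) ∧ ∀ a b : Fin q, x a a = x b b) ↔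
      ∃ c : ℝ, (fun a b => x a b) = c • (1 : Matrix (Fin q) (Fin q) ℝ)) := by
  have : Nonempty (Fin q) := ⟨⟨0, by omega⟩⟩
  have hequality := card_sub_one_mul_sum_sq_eq_two_mul_sum_minors_iff
    (by rwa [Fintype.card_fin]) x
  rw [Fintype.card_fin] at hequality
  exact ⟨hequality, offDiag_eq_zero_and_diag_eq_iff_exists_eq_smul_one x⟩
end
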